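/- arXiv:0909.2420 — 2 statements merged into one kernel-verified Lean document; each statement's English description precedes it below -/
import Mathlib

section
/- For all real numbers a, b in [0,1], arccos(a·b) ≤ √(arccos(a)² + arccos(b)²). -/
/-!
By the spherical Pythagorean theorem, `arccos (cos x * cos y)` is the hypotenuse of a right
spherical triangle with legs `x = arccos a` and `y = arccos b`; the claim is that it is no longer
than the Euclidean hypotenuse. For fixed `y`, the difference
`t ↦ √(t² + y²) - arccos (cos t * cos y)` vanishes at `t = 0`, and it is nondecreasing on `[0, π]`:
since `1 - cos² t cos² y = sin² t cos² y + sin² y`, comparing the two derivatives reduces to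
`sin² t (y cos y)² ≤ t² sin² y`, which follows from `|sin t| ≤ |t|` and `y ≤ tan y`.
-/

open Real Set

lemma mul_cos_le_sin {y : ℝ} (h0 : 0 ≤ y) (h : y ≤ π / 2) : y * cos y ≤ sin y := by
  rcases h.lt_or_eq with h | rfl
  · have hc : 0 < cos y := cos_pos_of_mem_Ioo ⟨by linarith [pi_pos], h⟩
    rw [← le_div_iff₀ hc, ← tan_eq_sin_div_cos]
    exact le_tan h0 h
  · simp

lemma sq_sin_mul_cos_mul_le (t : ℝ) {y : ℝ} (hy0 : 0 ≤ y) (hy : y ≤ π / 2) :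
    (sin t * cos y) ^ 2 * (t ^ 2 + y ^ 2) ≤ t ^ 2 * (1 - (cos t * cos y) ^ 2) := by
  have hcos : 0 ≤ cos y := cos_nonneg_of_mem_Icc ⟨by linarith [pi_pos], hy⟩
  have hy_cos : (y * cos y) ^ 2 ≤ sin y ^ 2 :=
    pow_le_pow_left₀ (mul_nonneg hy0 hcos) (mul_cos_le_sin hy0 hy) 2
  have key : sin t ^ 2 * (y * cos y) ^ 2 ≤ t ^ 2 * sin y ^ 2 :=
    mul_le_mul sin_sq_le_sq hy_cos (sq_nonneg _) (sq_nonneg _)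
  linear_combination key + t ^ 2 * cos y ^ 2 * sin_sq_add_cos_sq t + t ^ 2 * sin_sq_add_cos_sq y

lemma sin_mul_cos_div_le {t y : ℝ} (ht : 0 ≤ t) (hy0 : 0 ≤ y) (hy : y ≤ π / 2)
    (hcos : (cos t * cos y) ^ 2 < 1) (hty : 0 < t ^ 2 + y ^ 2) :
    sin t * cos y / √(1 - (cos t * cos y) ^ 2) ≤ t / √(t ^ 2 + y ^ 2) := by
  rw [div_le_div_iff₀ (sqrt_pos.2 (by linarith)) (sqrt_pos.2 hty)]
  calc sin t * cos y * √(t ^ 2 + y ^ 2)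
      ≤ |sin t * cos y| * √(t ^ 2 + y ^ 2) := by gcongr; exact le_abs_self _
    _ = √((sin t * cos y) ^ 2 * (t ^ 2 + y ^ 2)) := by
      rw [sqrt_mul (sq_nonneg _), sqrt_sq_eq_abs]
    _ ≤ √(t ^ 2 * (1 - (cos t * cos y) ^ 2)) := sqrt_le_sqrt (sq_sin_mul_cos_mul_le t hy0 hy)
    _ = t * √(1 - (cos t * cos y) ^ 2) := by rw [sqrt_mul (sq_nonneg _), sqrt_sq ht]

lemma hasDerivAt_sqrt_sq_add_sq {t : ℝ} (y : ℝ) (h : t ^ 2 + y ^ 2 ≠ 0) :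
    HasDerivAt (fun s => √(s ^ 2 + y ^ 2)) (t / √(t ^ 2 + y ^ 2)) t := by
  convert ((hasDerivAt_pow 2 t).add_const (y ^ 2)).sqrt h using 1
  field_simp
  ring

lemma hasDerivAt_arccos_cos_mul {t : ℝ} (c : ℝ) (h : (cos t * c) ^ 2 < 1) :
    HasDerivAt (fun s => arccos (cos s * c)) (sin t * c / √(1 - (cos t * c) ^ 2)) t := by
  obtain ⟨hlo, hhi⟩ : -1 < cos t * c ∧ cos t * c < 1 :=
    abs_lt_of_sq_lt_sq' (by rwa [one_pow]) zero_le_one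
  refine ((hasDerivAt_arccos hlo.ne' hhi.ne).comp t ((hasDerivAt_cos t).mul_const c)).congr_deriv ?_
  ring

theorem arccos_cos_mul_cos_le_sqrt {x y : ℝ} (hx : x ∈ Icc 0 π) (hy : y ∈ Icc 0 (π / 2)) :
    arccos (cos x * cos y) ≤ √(x ^ 2 + y ^ 2) := by
  set H := fun t => √(t ^ 2 + y ^ 2) - arccos (cos t * cos y)
  have interior_facts (t : ℝ) (ht : t ∈ interior (Icc 0 π)) :
      0 < t ∧ (cos t * cos y) ^ 2 < 1 ∧ 0 < t ^ 2 + y ^ 2 := by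
    rw [interior_Icc] at ht
    have hsin : 0 < sin t := sin_pos_of_pos_of_lt_pi ht.1 ht.2
    exact ⟨ht.1, by nlinarith [sin_sq_add_cos_sq t, cos_sq_le_one y, sq_nonneg (cos t)],
      by nlinarith [ht.1]⟩
  have hmono : MonotoneOn H (Icc 0 π) := by
    refine monotoneOn_of_hasDerivWithinAt_nonneg (convex_Icc 0 π) (by fun_prop)
      (f' := fun t => t / √(t ^ 2 + y ^ 2) - sin t * cos y / √(1 - (cos t * cos y) ^ 2))
      (fun t ht => ?_) (fun t ht => ?_)
    all_goals obtain ⟨ht0, hcos, hty⟩ := interior_facts t ht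
    · exact ((hasDerivAt_sqrt_sq_add_sq y hty.ne').sub
        (hasDerivAt_arccos_cos_mul (cos y) hcos)).hasDerivWithinAt
    · exact sub_nonneg.2 (sin_mul_cos_div_le ht0.le hy.1 hy.2 hcos hty)
  have hH0 : H 0 = 0 := by
    simp [H, sqrt_sq hy.1, arccos_cos hy.1 (hy.2.trans (by linarith [pi_pos]))]
  simpa [H, hH0] using hmono ⟨le_rfl, pi_pos.le⟩ hx hx.1

theorem arccos_mul_le_sqrt (a b : ℝ) (ha : a ∈ Set.Icc (0:ℝ) 1) (hb : b ∈ Set.Icc (0:ℝ) 1) :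
    Real.arccos (a * b) ≤ Real.sqrt (Real.arccos a ^ 2 + Real.arccos b ^ 2) := by
  have hx : arccos a ∈ Icc 0 π := ⟨arccos_nonneg a, arccos_le_pi a⟩
  have hy : arccos b ∈ Icc 0 (π / 2) := ⟨arccos_nonneg b, arccos_le_pi_div_two.2 hb.1⟩
  simpa [cos_arccos (by linarith [ha.1]) ha.2, cos_arccos (by linarith [hb.1]) hb.2] using
    arccos_cos_mul_cos_le_sqrt hx hy
end

section
/- For any finite family of real numbers λ₁,…,λ_m, each in [0,1], one has arccos(∏ᵢ λᵢ) ≤ √(∑ᵢ arccos(λᵢ)²). -/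
/-!
With `s = arccos x` and `t = arccos y`, one has `cos s * cos t = (cos (s - t) + cos (s + t)) / 2`
and `s ^ 2 + t ^ 2 = ((s - t) ^ 2 + (s + t) ^ 2) / 2`. Since `u ↦ cos √u` is convex on `[0, π ^ 2]`
(its derivative is `-(sin √u / √u) / 2`, and `sin x / x` decreases on `(0, π]`), this gives
`cos √(s ^ 2 + t ^ 2) ≤ x * y`, i.e. `arccos (x * y) ^ 2 ≤ arccos x ^ 2 + arccos y ^ 2`.
Induction on the number of factors finishes the proof.
-/

open Real Set

theorem Real.antitoneOn_sin_div_self : AntitoneOn (fun x => sin x / x) (Ioc 0 π) := by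
  intro a ha b hb hab
  -- `sin x / x` is the slope of the concave function `sin` between `0` and `x`
  have := strictConcaveOn_sin_Icc.concaveOn.antitoneOn_slope_gt (x := 0) ⟨le_rfl, pi_pos.le⟩
    ⟨⟨ha.1.le, ha.2⟩, ha.1⟩ ⟨⟨hb.1.le, hb.2⟩, hb.1⟩ hab
  simpa [slope_def_field] using this

theorem Real.hasDerivAt_cos_sqrt {u : ℝ} (hu : 0 < u) :
    HasDerivAt (fun v => cos √v) (-(sin √u / √u) / 2) u :=
  (hasDerivAt_sqrt hu.ne').cos.congr_deriv (by field_simp)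

theorem Real.convexOn_cos_sqrt : ConvexOn ℝ (Icc 0 (π ^ 2)) (fun u => cos √u) := by
  refine MonotoneOn.convexOn_of_deriv (convex_Icc _ _)
    (continuous_cos.comp continuous_sqrt).continuousOn ?_ ?_ <;> rw [interior_Icc]
  · exact fun u hu => (hasDerivAt_cos_sqrt hu.1).differentiableAt.differentiableWithinAt
  · intro u hu v hv huv
    have hsqrt {w : ℝ} (hw : w ∈ Ioo 0 (π ^ 2)) : √w ∈ Ioc 0 π :=
      ⟨sqrt_pos.2 hw.1, sqrt_le_left pi_pos.le |>.2 hw.2.le⟩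
    rw [(hasDerivAt_cos_sqrt hu.1).deriv, (hasDerivAt_cos_sqrt hv.1).deriv]
    have := antitoneOn_sin_div_self (hsqrt hu) (hsqrt hv) (sqrt_le_sqrt huv)
    linarith

theorem Real.cos_sqrt_sq_add_sq_le_cos_mul_cos {s t : ℝ} (hs : 0 ≤ s) (ht : 0 ≤ t)
    (hst : s + t ≤ π) : cos √(s ^ 2 + t ^ 2) ≤ cos s * cos t := by
  have hmem {x : ℝ} (hx : |x| ≤ π) : x ^ 2 ∈ Icc 0 (π ^ 2) :=
    ⟨sq_nonneg x, sq_le_sq' (abs_le.1 hx).1 (abs_le.1 hx).2⟩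
  have h := convexOn_cos_sqrt.2 (hmem (x := s - t) (abs_sub_le_iff.2 ⟨by linarith, by linarith⟩))
    (hmem (x := s + t) (by rwa [abs_of_nonneg (by positivity)])) (by norm_num : (0:ℝ) ≤ 1 / 2)
    (by norm_num : (0:ℝ) ≤ 1 / 2) (by norm_num)
  calc cos √(s ^ 2 + t ^ 2)
      = cos √((1 / 2 : ℝ) • (s - t) ^ 2 + (1 / 2 : ℝ) • (s + t) ^ 2) := by
        congr 2; simp only [smul_eq_mul]; ring
    _ ≤ (1 / 2 : ℝ) • cos √((s - t) ^ 2) + (1 / 2 : ℝ) • cos √((s + t) ^ 2) := h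
    _ = cos s * cos t := by
        simp only [smul_eq_mul, sqrt_sq_eq_abs, cos_abs, cos_sub, cos_add]; ring

theorem Real.arccos_mul_sq_le {x y : ℝ} (hx : x ∈ Icc 0 1) (hy : y ∈ Icc 0 1) :
    arccos (x * y) ^ 2 ≤ arccos x ^ 2 + arccos y ^ 2 := by
  set s := arccos x
  set t := arccos y
  have hs : s ≤ π / 2 := arccos_le_pi_div_two.2 hx.1
  have ht : t ≤ π / 2 := arccos_le_pi_div_two.2 hy.1
  have hr : √(s ^ 2 + t ^ 2) ≤ π := sqrt_le_left pi_pos.le |>.2 <| by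
    nlinarith [arccos_nonneg x, arccos_nonneg y]
  have hcos : cos √(s ^ 2 + t ^ 2) ≤ x * y := by
    simpa only [s, t, cos_arccos (by linarith [hx.1]) hx.2, cos_arccos (by linarith [hy.1]) hy.2]
      using cos_sqrt_sq_add_sq_le_cos_mul_cos (arccos_nonneg x) (arccos_nonneg y) (by linarith)
  rw [← le_sqrt (arccos_nonneg _) (by positivity)]
  calc arccos (x * y) ≤ arccos (cos √(s ^ 2 + t ^ 2)) := arccos_le_arccos hcos
    _ = √(s ^ 2 + t ^ 2) := arccos_cos (sqrt_nonneg _) hr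

theorem Real.arccos_prod_sq_le {ι : Type*} (s : Finset ι) {l : ι → ℝ}
    (hl : ∀ i ∈ s, l i ∈ Icc 0 1) :
    arccos (∏ i ∈ s, l i) ^ 2 ≤ ∑ i ∈ s, arccos (l i) ^ 2 := by
  induction s using Finset.cons_induction with
  | empty => simp [arccos_one]
  | cons a s _ ih =>
    simp only [Finset.mem_cons, forall_eq_or_imp] at hl
    rw [Finset.prod_cons, Finset.sum_cons]
    have hprod : ∏ i ∈ s, l i ∈ Icc 0 1 :=
      ⟨Finset.prod_nonneg fun i hi => (hl.2 i hi).1,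
        Finset.prod_le_one (fun i hi => (hl.2 i hi).1) fun i hi => (hl.2 i hi).2⟩
    exact (arccos_mul_sq_le hl.1 hprod).trans (add_le_add_right (ih hl.2) _)

theorem arccos_prod_le_sqrt_sum_sq {m : ℕ} (l : Fin m → ℝ)
    (hl : ∀ i, l i ∈ Set.Icc (0:ℝ) 1) :
    Real.arccos (∏ i, l i) ≤ Real.sqrt (∑ i, Real.arccos (l i) ^ 2) :=
  le_sqrt_of_sq_le (arccos_prod_sq_le Finset.univ fun i _ => hl i)
end
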